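/- arXiv:1612.00503 — 2 statements merged into one kernel-verified Lean document; each statement's English description precedes it below -/
import Mathlib

section
/- Let Z be a G×B matrix with entries in {-1,1} such that every row sums to 0 and every column sums to 0. Then it is impossible that both all pairs of distinct columns are orthogonal and all pairs of distinct rows are orthogonal. -/
/-! Column orthogonality alone is impossible: pairing a column `b` with the row sums gives
`0 = ∑ g, Z g b * ∑ b', Z g b' = ∑ b', ⟪col b, col b'⟫ = ‖col b‖² = G`. -/

open Finset

theorem Matrix.sum_mul_self_col_eq_zero {m n R : Type*} [Fintype m] [Fintype n]
    [NonUnitalNonAssocSemiring R] (Z : Matrix m n R) (hrow : ∀ i, ∑ j, Z i j = 0)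
    (horth : ∀ j j', j ≠ j' → ∑ i, Z i j * Z i j' = 0) (j : n) :
    ∑ i, Z i j * Z i j = 0 :=
  calc ∑ i, Z i j * Z i j = ∑ j', ∑ i, Z i j * Z i j' :=
        (sum_eq_single j (fun j' _ h => horth j j' h.symm) (absurd (mem_univ j))).symm
    _ = ∑ i, Z i j * ∑ j', Z i j' := by rw [sum_comm]; simp_rw [mul_sum]
    _ = 0 := by simp [hrow]

theorem Matrix.sum_mul_self_col_of_sign {m n R : Type*} [Fintype m] [Ring R]
    (Z : Matrix m n R) (j : n) (hpm : ∀ i, Z i j = 1 ∨ Z i j = -1) :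
    ∑ i, Z i j * Z i j = Fintype.card m := by
  have hsq : ∀ i, Z i j * Z i j = 1 := fun i => by rcases hpm i with h | h <;> simp [h]
  simp [hsq]

theorem no_doubly_orthogonal_balanced_design_general
    {G B : ℕ} (hG : 0 < G) (hB : 0 < B)
    (Z : Matrix (Fin G) (Fin B) ℤ)
    (hpm : ∀ g b, Z g b = 1 ∨ Z g b = -1)
    (hrow : ∀ g, ∑ b, Z g b = 0) :
    ¬ ((∀ b b' : Fin B, b ≠ b' → ∑ g, Z g b * Z g b' = 0) ∧
       (∀ g g' : Fin G, g ≠ g' → ∑ b, Z g b * Z g' b = 0)) := by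
  rintro ⟨hcols, -⟩
  let b : Fin B := ⟨0, hB⟩
  have hzero := Z.sum_mul_self_col_eq_zero hrow hcols b
  rw [Z.sum_mul_self_col_of_sign b (hpm · b), Fintype.card_fin] at hzero
  omega

theorem no_doubly_orthogonal_balanced_design
    {G B : ℕ} (hG : 0 < G) (hB : 0 < B)
    (Z : Matrix (Fin G) (Fin B) ℤ)
    (hpm : ∀ g b, Z g b = 1 ∨ Z g b = -1)
    (hrow : ∀ g, ∑ b, Z g b = 0)
    (hcol : ∀ b, ∑ g, Z g b = 0) :
    ¬ ((∀ b b' : Fin B, b ≠ b' → ∑ g, Z g b * Z g b' = 0) ∧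
       (∀ g g' : Fin G, g ≠ g' → ∑ b, Z g b * Z g' b = 0)) :=
  no_doubly_orthogonal_balanced_design_general hG hB Z hpm hrow
end

section
/- Suppose X is a G×B matrix over {-1,1} that is balanced (all row and column sums zero) and collision-free (no two rows equal or opposite, no two columns equal or opposite). Let r₁, r₂ be two distinct rows of X, c₁, c₂ two distinct columns of X, and z ∈ {-1,1}. Then the (G+4)×(B+4) matrix X* formed with blocks [X, c₁, -c₁, c₂, -c₂; r₁, z, z, -z, -z; -r₁, z, z, -z, -z; r₂, -z, -z, z, z; -r₂, -z, -z, z, z] is balanced and collision-free. -/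
open Finset

def Collides {k : ℕ} (v w : Fin k → ℤ) : Prop := v = w ∨ v = -w

def DesignBalanced {G B : ℕ} (M : Matrix (Fin G) (Fin B) ℤ) : Prop :=
  (∀ g, ∑ b, M g b = 0) ∧ (∀ b, ∑ g, M g b = 0)

def CollisionFree {G B : ℕ} (M : Matrix (Fin G) (Fin B) ℤ) : Prop :=
  (∀ g g', g ≠ g' → ¬ Collides (M g) (M g')) ∧
  (∀ b b', b ≠ b' → ¬ Collides (fun g => M g b) (fun g => M g b'))

/-- The extended matrix
`[X, c₁, -c₁, c₂, -c₂; r₁, z, z, -z, -z; -r₁, z, z, -z, -z; r₂, -z, -z, z, z; -r₂, -z, -z, z, z]`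
built from rows `g₁, g₂`, columns `b₁, b₂` of `X` and a sign `z`. -/
def extendDesign {G B : ℕ} (X : Matrix (Fin G) (Fin B) ℤ)
    (g₁ g₂ : Fin G) (b₁ b₂ : Fin B) (z : ℤ) :
    Matrix (Fin (G + 4)) (Fin (B + 4)) ℤ := fun i j =>
  if hi : (i : ℕ) < G then
    if hj : (j : ℕ) < B then
      X ⟨i, hi⟩ ⟨j, hj⟩
    else
      (if ((j : ℕ) - B) % 2 = 0 then 1 else -1) *
        (if (j : ℕ) - B < 2 then X ⟨i, hi⟩ b₁ else X ⟨i, hi⟩ b₂)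
  else
    if hj : (j : ℕ) < B then
      (if ((i : ℕ) - G) % 2 = 0 then 1 else -1) *
        (if (i : ℕ) - G < 2 then X g₁ ⟨j, hj⟩ else X g₂ ⟨j, hj⟩)
    else
      (if (i : ℕ) - G < 2 then z else -z) *
        (if (j : ℕ) - B < 2 then 1 else -1)


/-! The new rows are `±r₁` and `±r₂` followed by `±(z, z, -z, -z)`, and transposing the
construction swaps the roles of rows and columns, so only row sums and row collisions need
checking. An old row reads `x, -x` (with `x ≠ 0`) in the columns `c₁, -c₁`, where every new row
has two equal entries, so old and new rows never collide. Two new rows with the same tail are `rᵢ`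
and `-rᵢ` extended alike, which cannot collide as `rᵢ ≠ 0`; two with opposite tails would force
`r₁` and `r₂` to collide. -/

open Matrix

theorem Fin.append_inj {α : Type*} {m n : ℕ} {u v : Fin m → α} {a b : Fin n → α} :
    Fin.append u a = Fin.append v b ↔ u = v ∧ a = b := by
  refine ⟨fun h => ⟨funext fun i => ?_, funext fun i => ?_⟩, fun ⟨hu, ha⟩ => hu ▸ ha ▸ rfl⟩
  · simpa using congrFun h (Fin.castAdd n i)
  · simpa using congrFun h (Fin.natAdd m i)

theorem Fin.neg_append {α : Type*} [Neg α] {m n : ℕ} (u : Fin m → α) (a : Fin n → α) :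
    -Fin.append u a = Fin.append (-u) (-a) := by
  funext i
  refine Fin.addCases (fun i => ?_) (fun i => ?_) i <;> simp

theorem Fin.sum_append {M : Type*} [AddCommMonoid M] {m n : ℕ} (u : Fin m → M)
    (a : Fin n → M) : ∑ i, Fin.append u a i = ∑ i, u i + ∑ i, a i := by
  simp [Fin.sum_univ_add]

namespace Collides

variable {k : ℕ} {v w : Fin k → ℤ}

theorem symm (h : Collides v w) : Collides w v := by
  rcases h with rfl | rfl
  · exact .inl rfl
  · exact .inr (neg_neg w).symm

theorem apply_eq_apply_iff (h : Collides v w) (j j' : Fin k) : v j = v j' ↔ w j = w j' := by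
  rcases h with rfl | rfl <;> simp

end Collides

theorem collides_append_iff {m n : ℕ} {u v : Fin m → ℤ} {a b : Fin n → ℤ} :
    Collides (Fin.append u a) (Fin.append v b) ↔ (u = v ∧ a = b) ∨ (u = -v ∧ a = -b) := by
  rw [Collides, Fin.neg_append, Fin.append_inj, Fin.append_inj]

theorem Collides.of_append {m n : ℕ} {u v : Fin m → ℤ} {a b : Fin n → ℤ}
    (h : Collides (Fin.append u a) (Fin.append v b)) : Collides u v :=
  (collides_append_iff.1 h).imp And.left And.left

section
variable {G B : ℕ} (X : Matrix (Fin G) (Fin B) ℤ) (g₁ g₂ : Fin G) (b₁ b₂ : Fin B) (z : ℤ)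

theorem extendDesign_castAdd (g : Fin G) :
    extendDesign X g₁ g₂ b₁ b₂ z (Fin.castAdd 4 g) =
      Fin.append (X g) ![X g b₁, -X g b₁, X g b₂, -X g b₂] := by
  funext j
  refine Fin.addCases (fun b => ?_) (fun t => ?_) j
  · simp [extendDesign]
  · fin_cases t <;> simp [extendDesign]

theorem extendDesign_natAdd (s : Fin 4) :
    extendDesign X g₁ g₂ b₁ b₂ z (Fin.natAdd G s) =
      Fin.append (![X g₁, -X g₁, X g₂, -X g₂] s)
        (![![z, z, -z, -z], ![z, z, -z, -z], ![-z, -z, z, z], ![-z, -z, z, z]] s) := by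
  funext j
  refine Fin.addCases (fun b => ?_) (fun t => ?_) j
  · fin_cases s <;> simp [extendDesign]
  · fin_cases s <;> fin_cases t <;> simp [extendDesign]

theorem extendDesign_transpose :
    (extendDesign X g₁ g₂ b₁ b₂ z)ᵀ = extendDesign Xᵀ b₁ b₂ g₁ g₂ z := by
  ext i j
  refine Fin.addCases (fun b => ?_) (fun t => ?_) i <;>
    refine Fin.addCases (fun g => ?_) (fun s => ?_) j
  · simp [extendDesign_castAdd]
  · fin_cases s <;> simp [extendDesign_castAdd, extendDesign_natAdd]
  · fin_cases t <;> simp [extendDesign_castAdd, extendDesign_natAdd]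
  · fin_cases s <;> fin_cases t <;> simp [extendDesign_natAdd]

end

section
variable {G B : ℕ} {X : Matrix (Fin G) (Fin B) ℤ} {g₁ g₂ : Fin G} {b₁ b₂ : Fin B} {z : ℤ}

theorem extendDesign_rowSum (hX : ∀ g, ∑ b, X g b = 0) (i : Fin (G + 4)) :
    ∑ j, extendDesign X g₁ g₂ b₁ b₂ z i j = 0 := by
  refine Fin.addCases (fun g => ?_) (fun s => ?_) i
  · simp [extendDesign_castAdd, Fin.sum_append, Fin.sum_univ_four, hX]
  · fin_cases s <;> simp [extendDesign_natAdd, Fin.sum_append, Fin.sum_univ_four, hX]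

theorem extendDesign_castAdd_not_collides_natAdd (hX : ∀ g b, X g b ≠ 0) (g : Fin G)
    (s : Fin 4) :
    ¬ Collides (extendDesign X g₁ g₂ b₁ b₂ z (Fin.castAdd 4 g))
      (extendDesign X g₁ g₂ b₁ b₂ z (Fin.natAdd G s)) := by
  intro h
  have key := (h.apply_eq_apply_iff (Fin.natAdd B 0) (Fin.natAdd B 1)).2
  fin_cases s <;> simp [extendDesign_castAdd, extendDesign_natAdd, self_eq_neg, hX] at key

theorem extendDesign_natAdd_not_collides_natAdd (hX : ∀ g b, X g b ≠ 0)
    (hX₁₂ : ¬ Collides (X g₁) (X g₂)) (hz : z ≠ 0) {s s' : Fin 4} (hs : s ≠ s') :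
    ¬ Collides (extendDesign X g₁ g₂ b₁ b₂ z (Fin.natAdd G s))
      (extendDesign X g₁ g₂ b₁ b₂ z (Fin.natAdd G s')) := by
  have hXneg : ∀ g, X g ≠ -X g := fun g h => hX g b₁ (self_eq_neg.1 (congrFun h b₁))
  have hzneg : z ≠ -z := fun h => hz (self_eq_neg.1 h)
  have hX₂₁ : ¬ Collides (X g₂) (X g₁) := mt Collides.symm hX₁₂
  simp only [Collides, not_or] at hX₁₂ hX₂₁
  rw [extendDesign_natAdd, extendDesign_natAdd, collides_append_iff]
  fin_cases s <;> fin_cases s' <;> simp [neg_eq_iff_eq_neg, hXneg, hzneg, hX₁₂, hX₂₁] at hs ⊢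

theorem extendDesign_rows_not_collides (hX : ∀ g b, X g b ≠ 0)
    (hrows : ∀ g g', g ≠ g' → ¬ Collides (X g) (X g')) (hg : g₁ ≠ g₂) (hz : z ≠ 0)
    (i i' : Fin (G + 4)) (hi : i ≠ i') :
    ¬ Collides (extendDesign X g₁ g₂ b₁ b₂ z i) (extendDesign X g₁ g₂ b₁ b₂ z i') := by
  induction i using Fin.addCases with
  | left g =>
    induction i' using Fin.addCases with
    | left g' =>
      rw [extendDesign_castAdd, extendDesign_castAdd]
      exact fun h => hrows g g' (fun hg' => hi (hg' ▸ rfl)) h.of_append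
    | right s' => exact extendDesign_castAdd_not_collides_natAdd hX g s'
  | right s =>
    induction i' using Fin.addCases with
    | left g' => exact fun h => extendDesign_castAdd_not_collides_natAdd hX g' s h.symm
    | right s' =>
      exact extendDesign_natAdd_not_collides_natAdd hX (hrows g₁ g₂ hg) hz
        (fun hs => hi (hs ▸ rfl))

end

theorem extendDesign_balanced_collision_free
    {G B : ℕ} (X : Matrix (Fin G) (Fin B) ℤ)
    (hpm : ∀ g b, X g b = 1 ∨ X g b = -1)
    (hbal : DesignBalanced X) (hcf : CollisionFree X)
    (g₁ g₂ : Fin G) (hg : g₁ ≠ g₂)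
    (b₁ b₂ : Fin B) (hb : b₁ ≠ b₂)
    (z : ℤ) (hz : z = 1 ∨ z = -1) :
    DesignBalanced (extendDesign X g₁ g₂ b₁ b₂ z) ∧
      CollisionFree (extendDesign X g₁ g₂ b₁ b₂ z) := by
  have hX : ∀ g b, X g b ≠ 0 := fun g b => by rcases hpm g b with h | h <;> simp [h]
  have hz₀ : z ≠ 0 := by rcases hz with rfl | rfl <;> norm_num
  have hT := extendDesign_transpose X g₁ g₂ b₁ b₂ z
  refine ⟨⟨extendDesign_rowSum hbal.1, fun b => ?_⟩,
    ⟨extendDesign_rows_not_collides hX hcf.1 hg hz₀, fun b b' hbb' => ?_⟩⟩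
  · show ∑ g, (extendDesign X g₁ g₂ b₁ b₂ z)ᵀ b g = 0
    rw [hT]
    exact extendDesign_rowSum hbal.2 b
  · show ¬ Collides ((extendDesign X g₁ g₂ b₁ b₂ z)ᵀ b) ((extendDesign X g₁ g₂ b₁ b₂ z)ᵀ b')
    rw [hT]
    exact extendDesign_rows_not_collides (fun b g => hX g b) hcf.2 hb hz₀ b b' hbb'
end
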